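/- arXiv:2404.04529 — 2 statements merged into one kernel-verified Lean document; each statement's English description precedes it below -/
import Mathlib

section
/- Let M be a countable ω-categorical homogeneous structure with weak elimination of imaginaries and no algebraicity. Then the group of topological automorphisms of Aut(M) is isomorphic to Aut(E_M), the automorphism group of the orbital structure of M. In particular, if M in addition has the small index property, then Aut(Aut(M)) ≅ Aut(E_M). -/
open FirstOrder

namespace Paper

variable (L : FirstOrder.Language) (M : Type*) [L.Structure M]

/-- The group of automorphisms of a first-order structure, with composition. -/
instance autGroup : Group (M ≃[L] M) where
  one := FirstOrder.Language.Equiv.refl L M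
  mul f g := f.comp g
  inv := FirstOrder.Language.Equiv.symm
  mul_assoc _ _ _ := rfl
  one_mul f := FirstOrder.Language.Equiv.ext fun a => by
    show (FirstOrder.Language.Equiv.refl L M).comp f a = f a; simp
  mul_one f := FirstOrder.Language.Equiv.ext fun a => by
    show f.comp (FirstOrder.Language.Equiv.refl L M) a = f a; simp
  inv_mul_cancel f := FirstOrder.Language.Equiv.ext fun a => by
    show f.symm.comp f a = FirstOrder.Language.Equiv.refl L M a; simp

@[simp] theorem aut_one_apply (a : M) : (1 : M ≃[L] M) a = a := by
  show FirstOrder.Language.Equiv.refl L M a = a; simp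
@[simp] theorem aut_mul_apply (f g : M ≃[L] M) (a : M) : (f * g) a = f (g a) := rfl
@[simp] theorem aut_inv_apply (f : M ≃[L] M) (a : M) : f⁻¹ a = f.symm a := rfl
@[simp] theorem aut_coe_mul (f g : M ≃[L] M) : ⇑(f * g) = ⇑f ∘ ⇑g := rfl

/-- The natural action of the automorphism group on the structure. -/
instance autAction : MulAction (M ≃[L] M) M where
  smul f a := f a
  one_smul _ := rfl
  mul_smul _ _ _ := rfl

@[simp] theorem aut_smul_def (f : M ≃[L] M) (a : M) : f • a = f a := rfl

/-- The topology of pointwise convergence on the automorphism group (the domain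
being regarded as discrete). -/
instance autTopology : TopologicalSpace (M ≃[L] M) :=
  letI : TopologicalSpace M := ⊥
  TopologicalSpace.induced (fun g => (g : M → M)) Pi.topologicalSpace

/-- The pointwise stabilizer `G_(A)` of a set `A ⊆ M` in `Aut(M)`. -/
def pstab (A : Set M) : Subgroup (M ≃[L] M) where
  carrier := {g | ∀ a ∈ A, g a = a}
  one_mem' := fun _ _ => rfl
  mul_mem' := by
    intro f g hf hg a ha
    simp only [Set.mem_setOf_eq] at *
    rw [aut_mul_apply, hg a ha, hf a ha]
  inv_mem' := by
    intro f hf a ha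
    simp only [Set.mem_setOf_eq] at *
    rw [aut_inv_apply]
    conv_lhs => rw [← hf a ha]
    exact f.symm_apply_apply a

/-- The setwise stabilizer `G_{A}` of a set `A ⊆ M` in `Aut(M)`. -/
def sstab (A : Set M) : Subgroup (M ≃[L] M) where
  carrier := {g | g '' A = A}
  one_mem' := by
    simp only [Set.mem_setOf_eq]
    ext a; simp [Set.mem_image]
  mul_mem' := by
    intro f g hf hg
    simp only [Set.mem_setOf_eq] at *
    rw [aut_coe_mul, Set.image_comp, hg, hf]
  inv_mem' := by
    intro f hf
    simp only [Set.mem_setOf_eq] at *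
    conv_lhs => rw [← hf]
    rw [Set.image_image]
    ext a; constructor
    · rintro ⟨x, hx, rfl⟩
      simpa [f.symm_apply_apply] using hx
    · intro ha
      exact ⟨a, ha, f.symm_apply_apply a⟩

/-- The Galois-algebraic closure of `A ⊆ M`: the set of elements with finite orbit
under the pointwise stabilizer of `A`. -/
def aclg (A : Set M) : Set M :=
  {b | (MulAction.orbit (pstab L M A) b).Finite}

/-- The Galois-definable closure of the empty set: elements fixed by every automorphism. -/
def dclg0 : Set M := {b | ∀ g : M ≃[L] M, g b = b}

/-- `p : K ≃ K'` is an isomorphism between the induced substructures on `K` and `K'`. -/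
def IsPartialIso (K K' : Set M) (p : K ≃ K') : Prop :=
  (∀ {n : ℕ} (f : L.Functions n) (x : Fin n → K),
      ∃ h : FirstOrder.Language.Structure.funMap f (fun i => (x i : M)) ∈ K,
        (p ⟨FirstOrder.Language.Structure.funMap f (fun i => (x i : M)), h⟩ : M) =
          FirstOrder.Language.Structure.funMap f (fun i => (p (x i) : M))) ∧
  (∀ {n : ℕ} (r : L.Relations n) (x : Fin n → K),
      FirstOrder.Language.Structure.RelMap r (fun i => (x i : M)) ↔
        FirstOrder.Language.Structure.RelMap r (fun i => (p (x i) : M)))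

/-- `A(M)`: the collection of Galois-algebraic closures of finite subsets of `M`. -/
def AA : Set (Set M) := {K | ∃ A : Set M, A.Finite ∧ K = aclg L M A}

/-- Hypothesis (H). -/
structure HypH : Prop where
  countable : Countable M
  locallyFinite : ∀ A : Set M, A.Finite → (aclg L M A).Finite
  extendsIso : ∀ (K K' : Set M), K.Finite → K'.Finite →
    aclg L M K = K → aclg L M K' = K' → ∀ p : K ≃ K', IsPartialIso L M K K' p →
      ∃ g : M ≃[L] M, ∀ a : K, g a = (p a : M)
  openSandwich : ∀ H : Subgroup (M ≃[L] M), IsOpen (H : Set (M ≃[L] M)) →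
    ∃! K : Set M, K.Finite ∧ aclg L M K = K ∧ pstab L M K ≤ H ∧ H ≤ sstab L M K


/-- Generalized pointwise stabilizer `G_(K,L)`. -/
def genStab (K : Set M) (Lsub : Subgroup (Equiv.Perm K)) : Subgroup (M ≃[L] M) where
  carrier := {f | ∃ p ∈ Lsub, ∀ a : K, f a = (p a : M)}
  one_mem' := ⟨1, Lsub.one_mem, fun a => by simp⟩
  mul_mem' := by
    rintro f g ⟨p, hp, hfp⟩ ⟨q, hq, hgq⟩
    refine ⟨p * q, Lsub.mul_mem hp hq, fun a => ?_⟩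
    rw [aut_mul_apply, hgq a, hfp (q a)]
    rfl
  inv_mem' := by
    rintro f ⟨p, hp, hfp⟩
    refine ⟨p⁻¹, Lsub.inv_mem hp, fun a => ?_⟩
    have h1 : f ((p⁻¹ a : K) : M) = ((p (p⁻¹ a) : K) : M) := hfp _
    rw [show p (p⁻¹ a) = a from Equiv.apply_symm_apply p a] at h1
    rw [aut_inv_apply, ← h1, FirstOrder.Language.Equiv.symm_apply_apply]

/-- `GS(M)`: the collection of generalized pointwise stabilizers. -/
def GS : Set (Subgroup (M ≃[L] M)) :=
  {H | ∃ K ∈ AA L M, ∃ Lsub : Subgroup (Equiv.Perm K),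
    (∀ p ∈ Lsub, IsPartialIso L M K K (p : K ≃ K)) ∧ H = genStab L M K Lsub}

/-- `PS(M)`: the collection of pointwise stabilizers of members of `A(M)`. -/
def PS : Set (Subgroup (M ≃[L] M)) := {H | ∃ K ∈ AA L M, H = pstab L M K}

/-- The lattice `A₊(M)`. -/
def Aplus : Set (Set M) := AA L M ∪ {dclg0 L M}

/-- Covering relation in `S`. -/
def hasseCovers {α : Type*} (S : Set (Set α)) (A B : Set α) : Prop :=
  A ∈ S ∧ B ∈ S ∧ A ⊂ B ∧ ¬∃ C ∈ S, A ⊂ C ∧ C ⊂ B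

/-- Adjacency in the Hasse diagram of `S`. -/
def hasseAdj {α : Type*} (S : Set (Set α)) (A B : Set α) : Prop :=
  hasseCovers S A B ∨ hasseCovers S B A

/-- `A_k(M)`: members of `A(M)` distinct from `dcl(∅)` at distance `≤ k` from the bottom
of the lattice `A₊(M)` in its Hasse diagram. -/
def Ak (k : ℕ) : Set (Set M) :=
  {K | K ∈ AA L M ∧ K ≠ dclg0 L M ∧ ∃ (j : ℕ) (c : Fin (j + 1) → Set M), j ≤ k ∧
    c 0 = dclg0 L M ∧ c (Fin.last j) = K ∧
    ∀ i : Fin j, hasseAdj (Aplus L M) (c i.castSucc) (c i.succ)}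

/-- `A_k(M)` for `k ≤ ω`, with `A_ω(M) = A(M)`. -/
def AkE (k : ℕ∞) : Set (Set M) :=
  match k with
  | ⊤ => AA L M
  | (k : ℕ) => Ak L M k

/-- `k_M`: the supremum of lengths of strict chains of Galois-algebraic closures of
singletons. -/
noncomputable def kM : ℕ∞ :=
  ⨆ k ∈ {k : ℕ | ∃ a : Fin k → M, ∀ i j : Fin k, i < j → aclg L M {a i} ⊂ aclg L M {a j}},
    (k : ℕ∞)

/-- The domain of the expanded structure `E^ex_M(k)`: triples `(K, p, K')` with
`K, K' ∈ A_k(M)` and `p : K ≅ K'`. -/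
structure ExTriple (k : ℕ∞) where
  K : Set M
  K' : Set M
  hK : K ∈ AkE L M k
  hK' : K' ∈ AkE L M k
  p : K ≃ K'
  iso : IsPartialIso L M K K' p

/-- The unary predicate of `E^ex_M(k)` holding of the identity triples. -/
def IsIdTriple {k : ℕ∞} (t : ExTriple L M k) : Prop :=
  t.K = t.K' ∧ ∀ a : t.K, (t.p a : M) = (a : M)

/-- The `n`-ary relation `E_n` of `E^ex_M(k)`. -/
def ERel {k : ℕ∞} {n : ℕ} (x : Fin n → ExTriple L M k) : Prop :=
  ∃ g : M ≃[L] M, ∀ (i : Fin n) (a : (x i).K), g a = ((x i).p a : M)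

/-- The binary relation `Dom` of `E^ex_M(k)`. -/
def DomRel {k : ℕ∞} (t s : ExTriple L M k) : Prop := IsIdTriple L M s ∧ s.K = t.K

/-- The binary relation `Cod` of `E^ex_M(k)`. -/
def CodRel {k : ℕ∞} (t s : ExTriple L M k) : Prop := IsIdTriple L M s ∧ s.K = t.K'

variable {L M}

/-- A bijection between the domains of `E^ex_M(k)` and `E^ex_N(k)` is an isomorphism
if it preserves the identity-triple predicate, all the relations `E_n`, `Dom` and `Cod`. -/
def IsExIso {L' : FirstOrder.Language} {N : Type*} [L'.Structure N] {k : ℕ∞}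
    (F : ExTriple L M k ≃ ExTriple L' N k) : Prop :=
  (∀ t, IsIdTriple L M t ↔ IsIdTriple L' N (F t)) ∧
  (∀ (n : ℕ) (x : Fin n → ExTriple L M k), ERel L M x ↔ ERel L' N (F ∘ x)) ∧
  (∀ t s, DomRel L M t s ↔ DomRel L' N (F t) (F s)) ∧
  (∀ t s, CodRel L M t s ↔ CodRel L' N (F t) (F s))

variable (L M)

/-- The automorphism group of the expanded structure `E^ex_M(k)`. -/
def exAut (k : ℕ∞) : Subgroup (Equiv.Perm (ExTriple L M k)) where
  carrier := {σ | IsExIso (σ : ExTriple L M k ≃ ExTriple L M k)}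
  one_mem' := by
    refine ⟨fun t => ?_, fun n x => ?_, fun t s => ?_, fun t s => ?_⟩ <;>
      simp [Equiv.Perm.coe_one, Function.comp_def]
  mul_mem' := by
    rintro σ τ ⟨hσ1, hσ2, hσ3, hσ4⟩ ⟨hτ1, hτ2, hτ3, hτ4⟩
    refine ⟨fun t => ?_, fun n x => ?_, fun t s => ?_, fun t s => ?_⟩
    · exact (hτ1 t).trans (hσ1 (τ t))
    · exact (hτ2 n x).trans (hσ2 n (τ ∘ x))
    · exact (hτ3 t s).trans (hσ3 (τ t) (τ s))
    · exact (hτ4 t s).trans (hσ4 (τ t) (τ s))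
  inv_mem' := by
    rintro σ ⟨hσ1, hσ2, hσ3, hσ4⟩
    refine ⟨fun t => ?_, fun n x => ?_, fun t s => ?_, fun t s => ?_⟩
    · have := hσ1 (σ⁻¹ t); simpa using this.symm
    · have := hσ2 n (⇑(σ⁻¹) ∘ x)
      have hx : ⇑σ ∘ ⇑(σ⁻¹) ∘ x = x := by
        funext i; simp
      rw [hx] at this
      exact this.symm
    · have := hσ3 (σ⁻¹ t) (σ⁻¹ s); simpa using this.symm
    · have := hσ4 (σ⁻¹ t) (σ⁻¹ s); simpa using this.symm

/-- The subgroup of topological automorphisms of a topological group. -/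
def topMulAut (G : Type*) [Group G] [TopologicalSpace G] : Subgroup (MulAut G) where
  carrier := {α | Continuous (α : G → G) ∧ Continuous (α.symm : G → G)}
  one_mem' := ⟨continuous_id, continuous_id⟩
  mul_mem' := by
    rintro α β ⟨hα1, hα2⟩ ⟨hβ1, hβ2⟩
    exact ⟨hα1.comp hβ1, hβ2.comp hα2⟩
  inv_mem' := by
    rintro α ⟨h1, h2⟩
    exact ⟨h2, h1⟩

/-- A group isomorphism between topological groups which is a homeomorphism. -/
def IsTopIso {G H : Type*} [Group G] [Group H] [TopologicalSpace G] [TopologicalSpace H]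
    (e : G ≃* H) : Prop :=
  Continuous (e : G → H) ∧ Continuous (e.symm : H → G)

/-- The natural homomorphism from `Aut(M)` to the symmetric group on `M`. -/
def toPerm : (M ≃[L] M) →* Equiv.Perm M where
  toFun g := g.toEquiv
  map_one' := rfl
  map_mul' f g := Equiv.ext fun _ => rfl

/-- The orbit equivalence relation on `n`-tuples. -/
def orbRel (n : ℕ) (x y : Fin n → M) : Prop := ∃ g : M ≃[L] M, ∀ i, g (x i) = y i

/-- The automorphism group of the orbital structure `E_M`: permutations of `M`
preserving each orbit equivalence relation. -/
def autOrbital : Subgroup (Equiv.Perm M) where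
  carrier := {f | ∀ (n : ℕ) (x y : Fin n → M),
    orbRel L M n x y ↔ orbRel L M n (f ∘ x) (f ∘ y)}
  one_mem' := by intro n x y; simp [Equiv.Perm.coe_one]
  mul_mem' := by
    intro f g hf hg n x y
    exact (hg n x y).trans (hf n (g ∘ x) (g ∘ y))
  inv_mem' := by
    intro f hf n x y
    have := hf n (⇑(f⁻¹) ∘ x) (⇑(f⁻¹) ∘ y)
    have hx : ⇑f ∘ ⇑(f⁻¹) ∘ x = x := by funext i; simp
    have hy : ⇑f ∘ ⇑(f⁻¹) ∘ y = y := by funext i; simp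
    rw [hx, hy] at this
    exact this.symm

/-- `Aut°(E_M)`: automorphisms of the orbital structure preserving each orbit
equivalence class. -/
def autOrbitalFix : Subgroup (Equiv.Perm M) where
  carrier := {f | f ∈ autOrbital L M ∧ ∀ (n : ℕ) (x : Fin n → M), orbRel L M n x (f ∘ x)}
  one_mem' := ⟨(autOrbital L M).one_mem, fun n x => ⟨1, fun i => by simp [Equiv.Perm.coe_one]⟩⟩
  mul_mem' := by
    rintro f g ⟨hf, hf2⟩ ⟨hg, hg2⟩
    refine ⟨(autOrbital L M).mul_mem hf hg, fun n x => ?_⟩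
    obtain ⟨a, ha⟩ := hg2 n x
    obtain ⟨b, hb⟩ := hf2 n (g ∘ x)
    exact ⟨b * a, fun i => by rw [aut_mul_apply, ha i, hb i]; rfl⟩
  inv_mem' := by
    rintro f ⟨hf, hf2⟩
    refine ⟨(autOrbital L M).inv_mem hf, fun n x => ?_⟩
    obtain ⟨a, ha⟩ := hf2 n (⇑(f⁻¹) ∘ x)
    refine ⟨a⁻¹, fun i => ?_⟩
    have hi := ha i
    simp only [Function.comp_apply,
      show ∀ y, f (f⁻¹ y) = y from fun y => Equiv.apply_symm_apply f y] at hi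
    rw [← hi, aut_inv_apply, FirstOrder.Language.Equiv.symm_apply_apply]
    rfl

/-- A homogeneous structure: isomorphisms between finite substructures extend to
automorphisms. -/
def Homogeneous : Prop :=
  ∀ (K K' : Set M), K.Finite → K'.Finite → ∀ p : K ≃ K',
    IsPartialIso L M K K' p → ∃ g : M ≃[L] M, ∀ a : K, g a = (p a : M)

/-- Weak elimination of imaginaries, phrased group-theoretically: every open subgroup is
sandwiched between the pointwise and setwise stabilizers of a unique smallest finite
Galois-algebraically closed set. -/
def HasWEI : Prop :=
  ∀ H : Subgroup (M ≃[L] M), IsOpen (H : Set (M ≃[L] M)) →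
    ∃ K : Set M, (K.Finite ∧ aclg L M K = K ∧ pstab L M K ≤ H ∧ H ≤ sstab L M K) ∧
      ∀ K' : Set M, (K'.Finite ∧ aclg L M K' = K' ∧ pstab L M K' ≤ H ∧ H ≤ sstab L M K') →
        K ⊆ K'

/-- No algebraicity: every finite set is Galois-algebraically closed. -/
def NoAlgebraicity : Prop := ∀ A : Set M, A.Finite → aclg L M A = A

/-- The small index property: every subgroup of index `< 2^ℵ₀` is open. -/
def SIP : Prop :=
  ∀ H : Subgroup (M ≃[L] M), Cardinal.mk ((M ≃[L] M) ⧸ H) < Cardinal.continuum →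
    IsOpen (H : Set (M ≃[L] M))

/-- An oligomorphic action: finitely many orbits on `n`-tuples for every `n`. -/
def Oligo (G : Type*) [Group G] (X : Type*) [MulAction G X] : Prop :=
  ∀ n : ℕ, Finite (MulAction.orbitRel.Quotient G (Fin n → X))

end Paper

namespace Paper

/-- ω-categoricity: `M` is, up to isomorphism, the unique countable model of its complete
first-order theory. -/
def IsOmegaCategorical (L : FirstOrder.Language) (M : Type w) [L.Structure M] : Prop :=
  Countable M ∧ ∀ (N : Type w) (iN : L.Structure N), Countable N → Nonempty N →
    (@FirstOrder.Language.Theory.Model L N iN (L.completeTheory M)) →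
      Nonempty (@FirstOrder.Language.Equiv L N M iN _)


/-!
A topological automorphism `e` of `G = Aut(M)` maps a point stabilizer `G_a` to an open
subgroup, which by weak elimination of imaginaries lies between `G_(K)` and `G_{K}` for a
finite nonempty `K`; pick `b ∈ K`. The set `K'` attached in the same way to `e⁻¹(G_b)`
consists of points with finite `G_a`-orbits, so `K' = {a}` by no algebraicity, that is,
`e(G_a) = G_b`. The resulting permutation `a ↦ b` of `M` satisfies `b(g a) = e(g) b(a)`, hence
preserves every orbit relation; conversely, conjugation by an automorphism of `E_M` is a
topological automorphism of `G`, and the two constructions are mutually inverse. Under the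
small index property every abstract automorphism is continuous, since the preimage of a
point stabilizer has countable index.
-/

section

variable {L : FirstOrder.Language} {M : Type*} [L.Structure M]

theorem mem_pstab_singleton {a : M} {g : M ≃[L] M} : g ∈ pstab L M {a} ↔ g a = a := by
  simp [pstab]

theorem inv_mul_mem_pstab_singleton {a : M} {g h : M ≃[L] M} :
    g⁻¹ * h ∈ pstab L M {a} ↔ h a = g a := by
  rw [mem_pstab_singleton, aut_mul_apply, aut_inv_apply]
  exact g.toEquiv.symm_apply_eq

theorem mem_pstab_singleton_apply {a : M} {g x : M ≃[L] M} :
    x ∈ pstab L M {g a} ↔ g⁻¹ * x * g ∈ pstab L M {a} := by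
  rw [mul_assoc, inv_mul_mem_pstab_singleton, mem_pstab_singleton, aut_mul_apply]

theorem sstab_singleton (a : M) : sstab L M {a} = pstab L M {a} := by
  ext g
  simp [sstab, mem_pstab_singleton]

theorem pstab_empty : pstab L M ∅ = ⊤ := by
  ext g
  simp [pstab]

theorem isOpen_setOf_apply_eq (a b : M) : IsOpen {g : M ≃[L] M | g a = b} :=
  letI : TopologicalSpace M := ⊥
  haveI : DiscreteTopology M := ⟨rfl⟩
  isOpen_induced <|
    (continuous_apply (A := fun _ : M => M) a).isOpen_preimage {b} (isOpen_discrete _)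

theorem isOpen_pstab_singleton (a : M) : IsOpen (pstab L M {a} : Set (M ≃[L] M)) := by
  convert isOpen_setOf_apply_eq (L := L) a a
  ext g
  exact mem_pstab_singleton

theorem continuous_of_isOpen_setOf_apply_eq {X : Type*} [TopologicalSpace X]
    {q : X → M ≃[L] M} (h : ∀ a b : M, IsOpen {x | q x a = b}) : Continuous q :=
  letI : TopologicalSpace M := ⊥
  haveI : DiscreteTopology M := ⟨rfl⟩
  continuous_induced_rng.2 (continuous_pi fun a => continuous_discrete_rng.2 (h a))

theorem continuous_mul_left_aut (h : M ≃[L] M) : Continuous fun g : M ≃[L] M => h * g :=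
  continuous_of_isOpen_setOf_apply_eq fun a b => by
    convert isOpen_setOf_apply_eq a (h.symm b) using 3 with g
    exact h.toEquiv.eq_symm_apply.symm

theorem NoAlgebraicity.mem_of_finite_orbit (hnoalg : NoAlgebraicity L M) {A : Set M}
    (hA : A.Finite) {c : M} (h : (MulAction.orbit (pstab L M A) c).Finite) : c ∈ A :=
  hnoalg A hA ▸ h

theorem NoAlgebraicity.pstab_singleton_ne_top (hnoalg : NoAlgebraicity L M) (a : M) :
    pstab L M {a} ≠ ⊤ := by
  intro htop
  refine Set.notMem_empty a
    (hnoalg.mem_of_finite_orbit Set.finite_empty ((Set.finite_singleton a).subset ?_))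
  rintro _ ⟨g, rfl⟩
  exact mem_pstab_singleton.1 (htop ▸ Subgroup.mem_top (g : M ≃[L] M))

theorem NoAlgebraicity.pstab_singleton_injective (hnoalg : NoAlgebraicity L M) :
    Function.Injective fun a : M => pstab L M {a} := by
  intro a b (hab : pstab L M {a} = pstab L M {b})
  refine (hnoalg.mem_of_finite_orbit (Set.finite_singleton a)
    ((Set.finite_singleton b).subset ?_)).symm
  rintro _ ⟨g, rfl⟩
  have hg : (g : M ≃[L] M) ∈ pstab L M {b} := hab ▸ g.2
  exact mem_pstab_singleton.1 hg

theorem nonempty_of_pstab_le {K : Set M} {H : Subgroup (M ≃[L] M)} (hK : pstab L M K ≤ H)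
    (hH : H ≠ ⊤) : K.Nonempty := by
  rw [Set.nonempty_iff_ne_empty]
  rintro rfl
  rw [pstab_empty] at hK
  exact hH (top_le_iff.1 hK)

/-- Every `g ∈ G_a` lies in one of the finitely many cosets `r · e⁻¹(G_b)` indexed by
`e(g) b ∈ K`, and `e⁻¹(G_b)` stabilizes `K'`, so each `c ∈ K'` has a finite `G_a`-orbit. -/
theorem NoAlgebraicity.subset_singleton_of_sstab (hnoalg : NoAlgebraicity L M)
    (e : MulAut (M ≃[L] M)) {a b : M} {K K' : Set M} (hK : K.Finite) (hK' : K'.Finite)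
    (hb : b ∈ K) (hKa : (pstab L M {a}).map e.toMonoidHom ≤ sstab L M K)
    (hK'b : (pstab L M {b}).comap e.toMonoidHom ≤ sstab L M K') : K' ⊆ {a} := by
  intro c hc
  have hfiber (v : M) : ((fun g : M ≃[L] M => g c) '' {g | e g b = v}).Finite := by
    rcases Set.eq_empty_or_nonempty {g : M ≃[L] M | e g b = v} with h | ⟨r, hr⟩
    · simp [h]
    refine (hK'.image r).subset ?_
    rintro _ ⟨g, hg, rfl⟩
    have hrg : r⁻¹ * g ∈ sstab L M K' := hK'b <| by
      rw [Subgroup.mem_comap, map_mul, map_inv, inv_mul_mem_pstab_singleton]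
      exact hg.trans hr.symm
    refine ⟨(r⁻¹ * g) c, (hrg : ⇑(r⁻¹ * g) '' K' = K') ▸ Set.mem_image_of_mem _ hc, ?_⟩
    simp
  refine hnoalg.mem_of_finite_orbit (Set.finite_singleton a)
    ((hK.biUnion fun v _ => hfiber v).subset ?_)
  rintro _ ⟨⟨g, hg⟩, rfl⟩
  have hgK : ⇑(e g) '' K = K := hKa (Subgroup.mem_map_of_mem _ hg)
  exact Set.mem_biUnion (hgK ▸ Set.mem_image_of_mem _ hb) ⟨g, rfl, rfl⟩

@[simp] theorem toPerm_apply (g : M ≃[L] M) (a : M) : toPerm L M g a = g a :=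
  rfl

/-- `Aut(M)` is closed in `Sym(M)`. -/
def autOfOrbRel (σ : Equiv.Perm M) (hσ : ∀ n (x : Fin n → M), orbRel L M n x (σ ∘ x)) :
    M ≃[L] M where
  toEquiv := σ
  map_fun' {n} F x := by
    obtain ⟨g, hg⟩ := hσ (n + 1) (Fin.snoc x (Language.Structure.funMap F x))
    have hx : g ∘ x = σ ∘ x := funext fun i => by simpa using hg i.castSucc
    have hF := hg (Fin.last n)
    simp only [Fin.snoc_last, Function.comp_apply] at hF
    change σ (Language.Structure.funMap F x) = Language.Structure.funMap F (σ ∘ x)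
    rw [← hF, g.map_fun, hx]
  map_rel' {n} r x := by
    obtain ⟨g, hg⟩ := hσ n x
    have hx : σ ∘ x = g ∘ x := funext fun i => (hg i).symm
    rw [← g.map_rel r x]
    exact iff_of_eq (congrArg _ hx)

@[simp] theorem autOfOrbRel_apply (σ : Equiv.Perm M)
    (hσ : ∀ n (x : Fin n → M), orbRel L M n x (σ ∘ x)) (a : M) : autOfOrbRel σ hσ a = σ a :=
  rfl

theorem orbRel_conj {f : Equiv.Perm M} (hf : f ∈ autOrbital L M) (g : M ≃[L] M) {n : ℕ}
    (x : Fin n → M) : orbRel L M n x (⇑(f * toPerm L M g * f⁻¹) ∘ x) := by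
  simpa [Function.comp_def] using (hf n (⇑f⁻¹ ∘ x) (g ∘ ⇑f⁻¹ ∘ x)).1 ⟨g, fun _ => rfl⟩

def conjAut {f : Equiv.Perm M} (hf : f ∈ autOrbital L M) : MulAut (M ≃[L] M) where
  toFun g := autOfOrbRel (f * toPerm L M g * f⁻¹) fun _ => orbRel_conj hf g
  invFun g := autOfOrbRel (f⁻¹ * toPerm L M g * f⁻¹⁻¹) fun _ =>
    orbRel_conj ((autOrbital L M).inv_mem hf) g
  left_inv g := by ext; simp
  right_inv g := by ext; simp
  map_mul' g h := by ext; simp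

theorem continuous_conjAut {f : Equiv.Perm M} (hf : f ∈ autOrbital L M) :
    Continuous (conjAut hf) :=
  continuous_of_isOpen_setOf_apply_eq fun a b => by
    convert isOpen_setOf_apply_eq (L := L) (f⁻¹ a) (f⁻¹ b) using 3 with g
    exact f.eq_symm_apply.symm

theorem conjAut_mem_topMulAut {f : Equiv.Perm M} (hf : f ∈ autOrbital L M) :
    conjAut hf ∈ topMulAut (M ≃[L] M) :=
  ⟨continuous_conjAut hf, continuous_conjAut ((autOrbital L M).inv_mem hf)⟩

theorem mem_autOrbital_of_orbRel {f : Equiv.Perm M}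
    (hf : ∀ n (x y : Fin n → M), orbRel L M n x y → orbRel L M n (f ∘ x) (f ∘ y))
    (hf' : ∀ n (x y : Fin n → M), orbRel L M n x y → orbRel L M n (⇑f⁻¹ ∘ x) (⇑f⁻¹ ∘ y)) :
    f ∈ autOrbital L M := fun n x y =>
  ⟨hf n x y, fun h => by simpa [Function.comp_def] using hf' n _ _ h⟩

theorem exists_comap_pstab_singleton_eq (hwei : HasWEI L M) (hnoalg : NoAlgebraicity L M)
    {e : MulAut (M ≃[L] M)} (he : e ∈ topMulAut (M ≃[L] M)) (a : M) :
    ∃ b, (pstab L M {b}).comap e.toMonoidHom = pstab L M {a} := by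
  have hopen₁ : IsOpen ((pstab L M {a}).map e.toMonoidHom : Set (M ≃[L] M)) := by
    rw [Subgroup.map_equiv_eq_comap_symm', Subgroup.coe_comap]
    exact (isOpen_pstab_singleton a).preimage he.2
  obtain ⟨K, ⟨hK, -, hKle, hleK⟩, -⟩ := hwei _ hopen₁
  obtain ⟨b, hb⟩ := nonempty_of_pstab_le hKle fun h => hnoalg.pstab_singleton_ne_top a <|
    Subgroup.map_injective e.injective <|
      h.trans (Subgroup.map_top_of_surjective _ e.surjective).symm
  have hopen₂ : IsOpen ((pstab L M {b}).comap e.toMonoidHom : Set (M ≃[L] M)) :=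
    (isOpen_pstab_singleton b).preimage he.1
  obtain ⟨K', ⟨hK', -, hK'le, hleK'⟩, -⟩ := hwei _ hopen₂
  have hK'ne : K'.Nonempty := nonempty_of_pstab_le hK'le fun h =>
    hnoalg.pstab_singleton_ne_top b <|
      Subgroup.comap_injective e.surjective (h.trans (Subgroup.comap_top _).symm)
  obtain rfl : K' = {a} :=
    hK'ne.subset_singleton_iff.1 (hnoalg.subset_singleton_of_sstab e hK hK' hb hleK hleK')
  exact ⟨b, le_antisymm (hleK'.trans (sstab_singleton (L := L) a).le) hK'le⟩

section PointMap

variable (hwei : HasWEI L M) (hnoalg : NoAlgebraicity L M)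

noncomputable def pointMap (e : topMulAut (M ≃[L] M)) (a : M) : M :=
  (exists_comap_pstab_singleton_eq hwei hnoalg e.2 a).choose

theorem comap_pstab_pointMap (e : topMulAut (M ≃[L] M)) (a : M) :
    (pstab L M {pointMap hwei hnoalg e a}).comap (e : MulAut (M ≃[L] M)).toMonoidHom =
      pstab L M {a} :=
  (exists_comap_pstab_singleton_eq hwei hnoalg e.2 a).choose_spec

theorem pointMap_eq_of_comap {e : topMulAut (M ≃[L] M)} {a b : M}
    (h : (pstab L M {b}).comap (e : MulAut (M ≃[L] M)).toMonoidHom = pstab L M {a}) :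
    pointMap hwei hnoalg e a = b :=
  hnoalg.pstab_singleton_injective <|
    Subgroup.comap_injective (e : MulAut (M ≃[L] M)).surjective <|
      (comap_pstab_pointMap hwei hnoalg e a).trans h.symm

theorem pointMap_one (a : M) : pointMap hwei hnoalg 1 a = a :=
  pointMap_eq_of_comap hwei hnoalg (Subgroup.comap_id _)

theorem pointMap_mul (e₁ e₂ : topMulAut (M ≃[L] M)) (a : M) :
    pointMap hwei hnoalg (e₁ * e₂) a = pointMap hwei hnoalg e₁ (pointMap hwei hnoalg e₂ a) := by
  refine pointMap_eq_of_comap hwei hnoalg ?_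
  rw [← comap_pstab_pointMap hwei hnoalg e₂ a,
    ← comap_pstab_pointMap hwei hnoalg e₁ (pointMap hwei hnoalg e₂ a), Subgroup.comap_comap]
  rfl

theorem pointMap_apply (e : topMulAut (M ≃[L] M)) (g : M ≃[L] M) (a : M) :
    pointMap hwei hnoalg e (g a) = (e : MulAut (M ≃[L] M)) g (pointMap hwei hnoalg e a) := by
  refine pointMap_eq_of_comap hwei hnoalg ?_
  ext x
  rw [Subgroup.mem_comap, mem_pstab_singleton_apply, mem_pstab_singleton_apply,
    ← comap_pstab_pointMap hwei hnoalg e a, Subgroup.mem_comap]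
  simp

noncomputable def pointPerm : topMulAut (M ≃[L] M) →* Equiv.Perm M where
  toFun e :=
    { toFun := pointMap hwei hnoalg e
      invFun := pointMap hwei hnoalg e⁻¹
      left_inv a := by rw [← pointMap_mul, inv_mul_cancel, pointMap_one]
      right_inv a := by rw [← pointMap_mul, mul_inv_cancel, pointMap_one] }
  map_one' := Equiv.ext (pointMap_one hwei hnoalg)
  map_mul' e₁ e₂ := Equiv.ext (pointMap_mul hwei hnoalg e₁ e₂)

@[simp] theorem pointPerm_apply (e : topMulAut (M ≃[L] M)) (a : M) :
    pointPerm hwei hnoalg e a = pointMap hwei hnoalg e a :=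
  rfl

theorem pointPerm_injective : Function.Injective (pointPerm hwei hnoalg) := by
  refine (injective_iff_map_eq_one _).2 fun e he => Subtype.ext <| MulEquiv.ext fun g =>
    FirstOrder.Language.Equiv.ext fun a => ?_
  have hfix (b : M) : pointMap hwei hnoalg e b = b := Equiv.ext_iff.1 he b
  simpa [hfix] using (pointMap_apply hwei hnoalg e g a).symm

theorem orbRel_pointPerm (e : topMulAut (M ≃[L] M)) {n : ℕ} {x y : Fin n → M}
    (h : orbRel L M n x y) :
    orbRel L M n (pointPerm hwei hnoalg e ∘ x) (pointPerm hwei hnoalg e ∘ y) := by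
  obtain ⟨g, hg⟩ := h
  exact ⟨(e : MulAut (M ≃[L] M)) g, fun i => by simp [← pointMap_apply, hg i]⟩

theorem pointMap_conjAut {f : Equiv.Perm M} (hf : f ∈ autOrbital L M) (a : M) :
    pointMap hwei hnoalg ⟨conjAut hf, conjAut_mem_topMulAut hf⟩ a = f a := by
  refine pointMap_eq_of_comap hwei hnoalg ?_
  ext x
  simp [mem_pstab_singleton, conjAut]

theorem range_pointPerm : (pointPerm hwei hnoalg).range = autOrbital L M := by
  refine le_antisymm ?_ fun f hf =>
    ⟨⟨conjAut hf, conjAut_mem_topMulAut hf⟩, Equiv.ext (pointMap_conjAut hwei hnoalg hf)⟩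
  rintro _ ⟨e, rfl⟩
  refine mem_autOrbital_of_orbRel (fun _ _ _ => orbRel_pointPerm hwei hnoalg e) ?_
  rw [← map_inv]
  exact fun _ _ _ => orbRel_pointPerm hwei hnoalg e⁻¹

noncomputable def topMulAutEquivAutOrbital : topMulAut (M ≃[L] M) ≃* autOrbital L M :=
  (MonoidHom.ofInjective (pointPerm_injective hwei hnoalg)).trans
    (MulEquiv.subgroupCongr (range_pointPerm hwei hnoalg))

end PointMap

theorem mk_quotient_comap_pstab_singleton_le (φ : (M ≃[L] M) →* (M ≃[L] M)) (a : M) :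
    Cardinal.mk ((M ≃[L] M) ⧸ (pstab L M {a}).comap φ) ≤ Cardinal.mk M := by
  have hcoset (g h : M ≃[L] M) : g⁻¹ * h ∈ (pstab L M {a}).comap φ ↔ φ h a = φ g a := by
    rw [Subgroup.mem_comap, map_mul, map_inv, inv_mul_mem_pstab_singleton]
  refine Cardinal.mk_le_of_injective (f := Quotient.lift (fun g => φ g a) fun g h hgh =>
    ((hcoset g h).1 (QuotientGroup.leftRel_apply.1 hgh)).symm) ?_
  exact Quotient.ind₂ fun g h hgh =>
    Quotient.sound (QuotientGroup.leftRel_apply.2 ((hcoset g h).2 hgh.symm))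

theorem SIP.continuous (hsip : SIP L M) (hM : Countable M) (φ : (M ≃[L] M) →* (M ≃[L] M)) :
    Continuous φ := by
  refine continuous_of_isOpen_setOf_apply_eq fun a b => ?_
  rcases Set.eq_empty_or_nonempty {g | φ g a = b} with h | ⟨g₀, hg₀⟩
  · exact h ▸ isOpen_empty
  have hopen := hsip _ <| (mk_quotient_comap_pstab_singleton_le φ a).trans_lt <|
    (Cardinal.mk_le_aleph0_iff.2 hM).trans_lt Cardinal.aleph0_lt_continuum
  convert hopen.preimage (continuous_mul_left_aut g₀⁻¹) using 1
  ext g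
  rw [Set.mem_preimage, SetLike.mem_coe, Subgroup.mem_comap, map_mul, map_inv,
    inv_mul_mem_pstab_singleton, Set.mem_ofPred_eq, show φ g₀ a = b from hg₀]

theorem topMulAut_eq_top (hsip : SIP L M) (hM : Countable M) : topMulAut (M ≃[L] M) = ⊤ :=
  eq_top_iff.2 fun e _ =>
    ⟨hsip.continuous hM e.toMonoidHom, hsip.continuous hM e.symm.toMonoidHom⟩

end

theorem stmt_3_general (L : FirstOrder.Language) (M : Type w) [L.Structure M]
    (hcat : IsOmegaCategorical L M) (hwei : HasWEI L M)
    (hnoalg : NoAlgebraicity L M) :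
    Nonempty (↥(topMulAut (M ≃[L] M)) ≃* ↥(autOrbital L M)) ∧
    (SIP L M → Nonempty (MulAut (M ≃[L] M) ≃* ↥(autOrbital L M))) :=
  ⟨⟨topMulAutEquivAutOrbital hwei hnoalg⟩, fun hsip =>
    ⟨Subgroup.topEquiv.symm.trans <|
      (MulEquiv.subgroupCongr (topMulAut_eq_top hsip hcat.1).symm).trans <|
        topMulAutEquivAutOrbital hwei hnoalg⟩⟩

/-- If `M` is a countable ω-categorical homogeneous structure with weak
elimination of imaginaries and no algebraicity, then the group of topological automorphisms
of `Aut(M)` is isomorphic to `Aut(E_M)`; if in addition `M` has the small index property,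
then `Aut(Aut(M)) ≅ Aut(E_M)`. -/
theorem stmt_3 (L : FirstOrder.Language) (M : Type w) [L.Structure M]
    (hcat : IsOmegaCategorical L M) (hhom : Homogeneous L M) (hwei : HasWEI L M)
    (hnoalg : NoAlgebraicity L M) :
    Nonempty (↥(topMulAut (M ≃[L] M)) ≃* ↥(autOrbital L M)) ∧
    (SIP L M → Nonempty (MulAut (M ≃[L] M) ≃* ↥(autOrbital L M))) :=
  stmt_3_general L M hcat hwei hnoalg

end Paper
end

section
/- Having weak elimination of imaginaries is a Borel property of ω-categorical structures: the set of oligomorphic closed subgroups G of Sym(ω) whose canonical structure M_G has weak elimination of imaginaries is a Borel subset of the Effros standard Borel space of closed subgroups of Sym(ω). -/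
namespace Paper

/-- The Polish group topology on `Sym(ω)` (pointwise convergence, refined so that
inversion is continuous; the open subgroups are the same). -/
instance permTopology : TopologicalSpace (Equiv.Perm ℕ) :=
  letI : TopologicalSpace ℕ := ⊥
  TopologicalSpace.induced
    (fun g => ((g : ℕ → ℕ), ((g⁻¹ : Equiv.Perm ℕ) : ℕ → ℕ))) inferInstance

/-- The pointwise stabilizer of `A ⊆ ω` inside a subgroup `G ≤ Sym(ω)`. -/
def stabIn (G : Subgroup (Equiv.Perm ℕ)) (A : Set ℕ) : Subgroup G where
  carrier := {g | ∀ a ∈ A, (g : Equiv.Perm ℕ) a = a}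
  one_mem' := fun a _ => rfl
  mul_mem' := by
    intro f g hf hg a ha
    have h1 := hg a ha
    have h2 := hf a ha
    simp only [Set.mem_setOf_eq, Subgroup.coe_mul, Equiv.Perm.coe_mul, Function.comp_apply]
    rw [h1, h2]
  inv_mem' := by
    intro g hg a ha
    have h1 := hg a ha
    simp only [Set.mem_setOf_eq, InvMemClass.coe_inv]
    conv_lhs => rw [← h1]
    simp

/-- The setwise stabilizer of `A ⊆ ω` inside a subgroup `G ≤ Sym(ω)`. -/
def sstabIn (G : Subgroup (Equiv.Perm ℕ)) (A : Set ℕ) : Subgroup G where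
  carrier := {g | (g : Equiv.Perm ℕ) '' A = A}
  one_mem' := by
    simp only [Set.mem_setOf_eq, OneMemClass.coe_one, Equiv.Perm.coe_one, Set.image_id]
  mul_mem' := by
    intro f g hf hg
    simp only [Set.mem_setOf_eq, Subgroup.coe_mul, Equiv.Perm.coe_mul] at *
    rw [Set.image_comp, hg, hf]
  inv_mem' := by
    intro f hf
    simp only [Set.mem_setOf_eq, InvMemClass.coe_inv] at *
    conv_lhs => rw [← hf]
    rw [Set.image_image]
    ext a
    constructor
    · rintro ⟨x, hx, rfl⟩
      simpa using hx
    · intro ha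
      exact ⟨a, ha, by simp⟩

/-- The Galois-algebraic closure of `A ⊆ ω` with respect to `G ≤ Sym(ω)`: the elements
whose orbit under the pointwise stabilizer of `A` in `G` is finite. -/
def aclIn (G : Subgroup (Equiv.Perm ℕ)) (A : Set ℕ) : Set ℕ :=
  {b | (MulAction.orbit (stabIn G A) b).Finite}

/-- `G ≤ Sym(ω)` is oligomorphic: finitely many orbits on `ωⁿ` for every `n`. -/
def IsOligomorphic (G : Subgroup (Equiv.Perm ℕ)) : Prop :=
  ∀ n : ℕ, Finite (MulAction.orbitRel.Quotient G (Fin n → ℕ))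

/-- Weak elimination of imaginaries for the canonical (ω-categorical) structure of
`G ≤ Sym(ω)`, phrased group-theoretically: every open subgroup of `G` lies between the
pointwise and the setwise stabilizer of a unique smallest finite Galois-algebraically
closed subset of `ω`. -/
def HasWEIgrp (G : Subgroup (Equiv.Perm ℕ)) : Prop :=
  ∀ H : Subgroup G, IsOpen (H : Set G) →
    ∃ K : Set ℕ, (K.Finite ∧ aclIn G K = K ∧ stabIn G K ≤ H ∧ H ≤ sstabIn G K) ∧
      ∀ K' : Set ℕ,
        (K'.Finite ∧ aclIn G K' = K' ∧ stabIn G K' ≤ H ∧ H ≤ sstabIn G K') → K ⊆ K'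

/-- The space of closed subgroups of `Sym(ω)`. -/
def ClosedSubgroups : Type :=
  {G : Subgroup (Equiv.Perm ℕ) // IsClosed (G : Set (Equiv.Perm ℕ))}

/-- The Effros Borel structure on the space of closed subgroups of `Sym(ω)`, generated by
the sets `{F : F ∩ U ≠ ∅}` for `U` open. -/
instance effros : MeasurableSpace ClosedSubgroups :=
  MeasurableSpace.generateFrom
    {S | ∃ U : Set (Equiv.Perm ℕ), IsOpen U ∧
      S = {G : ClosedSubgroups | (((G.1 : Subgroup (Equiv.Perm ℕ)) : Set (Equiv.Perm ℕ)) ∩ U).Nonempty}}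

/-- The Borel space of oligomorphic closed subgroups of `Sym(ω)` whose canonical
structure has weak elimination of imaginaries. -/
def OligWEISpace : Type :=
  {G : ClosedSubgroups // IsOligomorphic G.1 ∧ HasWEIgrp G.1}

instance : MeasurableSpace OligWEISpace := by unfold OligWEISpace; infer_instance

/-- Topological isomorphism of two subgroups of `Sym(ω)`: a group isomorphism which is a
homeomorphism for the subspace topologies. -/
def TopIso (G H : Subgroup (Equiv.Perm ℕ)) : Prop :=
  ∃ e : G ≃* H, Continuous (e : G → H) ∧ Continuous (e.symm : H → G)


/-- The canonical language of a permutation group `G ≤ Sym(ω)`: one `n`-ary relation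
symbol for each orbit of `G` on `ωⁿ`. -/
def canonicalLanguage (G : Subgroup (Equiv.Perm ℕ)) : FirstOrder.Language where
  Functions := fun _ => Empty
  Relations := fun n => Quotient (MulAction.orbitRel G (Fin n → ℕ))

/-- The canonical structure `M_G` of `G ≤ Sym(ω)`: each orbit relation symbol names the
corresponding orbit. -/
instance canonicalStructure (G : Subgroup (Equiv.Perm ℕ)) :
    (canonicalLanguage G).Structure ℕ where
  funMap := fun f _ => f.elim
  RelMap := fun {n} r x => Quotient.mk (MulAction.orbitRel G (Fin n → ℕ)) x = r

/-- Weak elimination of imaginaries for a structure `A`: for every formula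
`θ(x̄, ȳ)` defining an equivalence relation on `n`-tuples there is a formula `φ(x̄, z̄)`
such that each `θ`-class is of the form `φ(Aⁿ, b̄)` for exactly the parameters `b̄` in some
finite nonempty set `X`. -/
def HasWEIFormulas (L : FirstOrder.Language) (A : Type*) [L.Structure A] : Prop :=
  ∀ (n : ℕ) (θ : L.Formula (Fin n ⊕ Fin n)),
    (Equivalence fun x y : Fin n → A => θ.Realize (Sum.elim x y)) →
    ∃ (m : ℕ) (φ : L.Formula (Fin n ⊕ Fin m)), ∀ a : Fin n → A,
      ∃ X : Set (Fin m → A), X.Finite ∧ X.Nonempty ∧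
        ∀ b : Fin m → A,
          ({x : Fin n → A | θ.Realize (Sum.elim x a)} =
            {x : Fin n → A | φ.Realize (Sum.elim x b)}) ↔ b ∈ X

end Paper

/-!
Every canonical structure `M_G` is interdefinable with the structure `orbitStructure G` on `ℕ`
for one fixed countable relational language, in which the symbol indexed by an `n`-tuple `t`
names the `G`-orbit of `t`. That `x` lies in the `G`-orbit of `t` says that `G` meets the open
set `{g | g ∘ t = x}`, so it is an Effros-Borel condition on `G`. Since `ℕ` and the set of
formulas are countable, the realisation of any formula, and then weak elimination of
imaginaries (whose quantifiers range over formulas, tuples and finite sets of tuples), is a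
countable Boolean combination of such conditions. Oligomorphy is handled the same way: `G` has
finitely many orbits on `ℕⁿ` iff some finite set of `n`-tuples meets every orbit.
-/

open FirstOrder FirstOrder.Language

theorem Setoid.finite_quotient_iff_exists_finset {β : Type*} (s : Setoid β) :
    Finite (Quotient s) ↔ ∃ T : Finset β, ∀ x, ∃ t ∈ T, s x t := by
  classical
  constructor
  · intro _
    have := Fintype.ofFinite (Quotient s)
    refine ⟨(Finset.univ : Finset (Quotient s)).image Quotient.out, fun x => ?_⟩
    refine ⟨(⟦x⟧ : Quotient s).out, Finset.mem_image_of_mem _ (Finset.mem_univ _), ?_⟩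
    exact Quotient.exact (Quotient.out_eq ⟦x⟧).symm
  · rintro ⟨T, hT⟩
    refine Finite.of_surjective (fun t : T => (⟦t⟧ : Quotient s)) fun q => ?_
    obtain ⟨x, rfl⟩ := Quotient.exists_rep q
    obtain ⟨t, ht, hxt⟩ := hT x
    exact ⟨⟨t, ht⟩, Quotient.sound (s.symm hxt)⟩

theorem FirstOrder.Language.Term.exists_eq_var_of_isRelational {L : Language} [L.IsRelational]
    {β : Type*} (t : L.Term β) : ∃ i, t = Term.var i := by
  cases t with
  | var i => exact ⟨i, rfl⟩
  | func f => exact isEmptyElim f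

section Measurability

variable {α : Type*} [MeasurableSpace α]

theorem Measurable.equivalence {ι : Type*} [Countable ι] {r : α → ι → ι → Prop}
    (hr : ∀ x y, Measurable fun a => r a x y) : Measurable fun a => Equivalence (r a) := by
  have h : (fun a => Equivalence (r a)) = fun a => (∀ x, r a x x) ∧
      (∀ x y, r a x y → r a y x) ∧ ∀ x y z, r a x y → r a y z → r a x z :=
    funext fun a => propext ⟨fun h => ⟨h.refl, fun _ _ => h.symm, fun _ _ _ => h.trans⟩,
      fun ⟨hrefl, hsymm, htrans⟩ => ⟨hrefl, hsymm _ _, htrans _ _ _⟩⟩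
  rw [h]
  exact (Measurable.forall fun x => hr x x).and <|
    (Measurable.forall fun x => .forall fun y => (hr x y).imp (hr y x)).and <|
      .forall fun x => .forall fun y => .forall fun z => (hr x y).imp ((hr y z).imp (hr x z))

variable {L : Language} [L.IsRelational] {M : Type*} [Countable M] {S : α → L.Structure M}

theorem measurable_realize_boundedFormula
    (hS : ∀ n (R : L.Relations n) x, Measurable fun a => @Structure.RelMap L M (S a) n R x)
    {β : Type*} (v : β → M) {k : ℕ} (φ : L.BoundedFormula β k) (xs : Fin k → M) :
    Measurable fun a => @BoundedFormula.Realize L M (S a) β k φ v xs := by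
  induction φ with
  | falsum => exact measurable_const
  | equal t₁ t₂ =>
    obtain ⟨i, rfl⟩ := Term.exists_eq_var_of_isRelational t₁
    obtain ⟨j, rfl⟩ := Term.exists_eq_var_of_isRelational t₂
    exact measurable_const' fun _ _ => rfl
  | rel R ts =>
    choose w hw using fun i => Term.exists_eq_var_of_isRelational (ts i)
    simp only [BoundedFormula.Realize, hw, Term.realize_var]
    exact hS _ R _
  | imp φ ψ ihφ ihψ => exact (ihφ xs).imp (ihψ xs)
  | all φ ih => exact .forall fun x => ih (Fin.snoc xs x)

theorem measurable_realize_formula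
    (hS : ∀ n (R : L.Relations n) x, Measurable fun a => @Structure.RelMap L M (S a) n R x)
    {β : Type*} (v : β → M) (φ : L.Formula β) :
    Measurable fun a => @Formula.Realize L M (S a) β φ v :=
  measurable_realize_boundedFormula hS v φ default

theorem Paper.measurable_hasWEIFormulas [Countable L.Symbols]
    (hS : ∀ n (R : L.Relations n) x, Measurable fun a => @Structure.RelMap L M (S a) n R x) :
    Measurable fun a => @Paper.HasWEIFormulas L M (S a) := by
  unfold Paper.HasWEIFormulas
  simp only [Set.exists_finite_iff_finset, Set.ext_iff, Set.mem_ofPred_eq]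
  refine .forall fun n => .forall fun θ => .imp ?_ ?_
  · exact .equivalence fun x y => measurable_realize_formula hS _ θ
  refine .exists fun m => .exists fun φ => .forall fun a => .exists fun X =>
    .and measurable_const <| .forall fun b => .iff ?_ measurable_const
  exact .forall fun x => .iff (measurable_realize_formula hS _ θ)
    (measurable_realize_formula hS _ φ)

end Measurability

namespace Paper

theorem hasWEIFormulas_of_lHom {L L' : Language} {M : Type*} [L.Structure M] [L'.Structure M]
    (ϕ : L →ᴸ L') (ψ : L' →ᴸ L) [ϕ.IsExpansionOn M] [ψ.IsExpansionOn M]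
    (h : HasWEIFormulas L' M) : HasWEIFormulas L M := by
  intro n θ hθ
  obtain ⟨m, φ, hφ⟩ := h n (ϕ.onFormula θ) (by simpa only [LHom.realize_onFormula] using hθ)
  refine ⟨m, ψ.onFormula φ, fun a => ?_⟩
  simpa only [LHom.realize_onFormula] using hφ a

theorem continuous_perm_apply (n : ℕ) : Continuous fun g : Equiv.Perm ℕ => g n := by
  have : Continuous fun g : Equiv.Perm ℕ => ((g : ℕ → ℕ), ((g⁻¹ : Equiv.Perm ℕ) : ℕ → ℕ)) :=
    continuous_induced_dom
  exact (continuous_apply n).comp (continuous_fst.comp this)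

theorem isOpen_setOf_forall_apply_eq {k : ℕ} (t x : Fin k → ℕ) :
    IsOpen {g : Equiv.Perm ℕ | ∀ i, g (t i) = x i} := by
  simp only [Set.ofPred_forall]
  exact isOpen_iInter_of_finite fun i => (isOpen_discrete {x i}).preimage (continuous_perm_apply _)

theorem measurableSet_inter_nonempty {U : Set (Equiv.Perm ℕ)} (hU : IsOpen U) :
    MeasurableSet {G : ClosedSubgroups | ((G.1 : Set (Equiv.Perm ℕ)) ∩ U).Nonempty} :=
  MeasurableSpace.measurableSet_generateFrom ⟨U, hU, rfl⟩

theorem measurable_mem_orbit {k : ℕ} (t x : Fin k → ℕ) :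
    Measurable fun G : ClosedSubgroups => x ∈ MulAction.orbit G.1 t := by
  have h : {G : ClosedSubgroups | x ∈ MulAction.orbit G.1 t} =
      {G | ((G.1 : Set (Equiv.Perm ℕ)) ∩ {g | ∀ i, g (t i) = x i}).Nonempty} := by
    ext G
    simp only [Set.mem_ofPred_eq, MulAction.mem_orbit_iff, funext_iff]
    exact ⟨fun ⟨g, hg⟩ => ⟨g, g.2, hg⟩, fun ⟨g, hG, hg⟩ => ⟨⟨g, hG⟩, hg⟩⟩
  rw [← measurableSet_setOfPred, h]
  exact measurableSet_inter_nonempty (isOpen_setOf_forall_apply_eq t x)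

theorem measurable_isOligomorphic :
    Measurable fun G : ClosedSubgroups => IsOligomorphic G.1 := by
  simp only [IsOligomorphic, MulAction.orbitRel.Quotient, Setoid.finite_quotient_iff_exists_finset,
    MulAction.orbitRel_apply]
  exact .forall fun n => .exists fun T => .forall fun x => .exists fun t =>
    .and measurable_const (measurable_mem_orbit t x)

def tupleLanguage : Language where
  Functions := fun _ => Empty
  Relations := fun n => Fin n → ℕ

instance : tupleLanguage.IsRelational := fun _ => inferInstanceAs (IsEmpty Empty)

instance : Countable tupleLanguage.Symbols :=
  inferInstanceAs (Countable ((Σ _ : ℕ, Empty) ⊕ Σ n, Fin n → ℕ))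

abbrev orbitStructure (G : Subgroup (Equiv.Perm ℕ)) : tupleLanguage.Structure ℕ where
  RelMap := fun {n} (t : Fin n → ℕ) x => x ∈ MulAction.orbit G t

instance (G : Subgroup (Equiv.Perm ℕ)) : (canonicalLanguage G).IsRelational :=
  fun _ => inferInstanceAs (IsEmpty Empty)

def tupleLanguageToCanonical (G : Subgroup (Equiv.Perm ℕ)) :
    tupleLanguage →ᴸ canonicalLanguage G where
  onRelation := fun {n} t => Quotient.mk (MulAction.orbitRel G (Fin n → ℕ)) t

noncomputable def canonicalToTupleLanguage (G : Subgroup (Equiv.Perm ℕ)) :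
    canonicalLanguage G →ᴸ tupleLanguage where
  onRelation := fun {n} (r : Quotient (MulAction.orbitRel G (Fin n → ℕ))) => r.out

theorem isExpansionOn_tupleLanguageToCanonical (G : Subgroup (Equiv.Perm ℕ)) :
    @LHom.IsExpansionOn _ _ (tupleLanguageToCanonical G) ℕ (orbitStructure G) _ :=
  letI := orbitStructure G
  { map_onRelation := fun _ _ => propext (Quotient.eq.trans MulAction.orbitRel_apply) }

theorem isExpansionOn_canonicalToTupleLanguage (G : Subgroup (Equiv.Perm ℕ)) :
    @LHom.IsExpansionOn _ _ (canonicalToTupleLanguage G) ℕ _ (orbitStructure G) :=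
  letI := orbitStructure G
  { map_onRelation := fun r _ => by
      conv_rhs => rw [← Quotient.out_eq r]
      exact (propext (Quotient.eq.trans MulAction.orbitRel_apply)).symm }

theorem hasWEIFormulas_canonicalLanguage_iff (G : Subgroup (Equiv.Perm ℕ)) :
    HasWEIFormulas (canonicalLanguage G) ℕ ↔
      @HasWEIFormulas tupleLanguage ℕ (orbitStructure G) := by
  let := orbitStructure G
  have := isExpansionOn_tupleLanguageToCanonical G
  have := isExpansionOn_canonicalToTupleLanguage G
  exact ⟨hasWEIFormulas_of_lHom (tupleLanguageToCanonical G) (canonicalToTupleLanguage G),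
    hasWEIFormulas_of_lHom (canonicalToTupleLanguage G) (tupleLanguageToCanonical G)⟩

theorem measurable_hasWEIFormulas_canonicalLanguage :
    Measurable fun G : ClosedSubgroups => HasWEIFormulas (canonicalLanguage G.1) ℕ := by
  simp only [hasWEIFormulas_canonicalLanguage_iff]
  exact measurable_hasWEIFormulas fun _ t x => measurable_mem_orbit t x

/-- Weak elimination of imaginaries is a Borel property: the set of
oligomorphic closed subgroups of `Sym(ω)` whose canonical structure has weak elimination
of imaginaries is a Borel subset of the Effros Borel space of closed subgroups of
`Sym(ω)`. -/
theorem stmt_18 :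
    MeasurableSet {G : ClosedSubgroups |
      IsOligomorphic G.1 ∧ HasWEIFormulas (canonicalLanguage G.1) ℕ} :=
  (measurable_isOligomorphic.and measurable_hasWEIFormulas_canonicalLanguage).setOf

end Paper
end
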